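/- Let R be a commutative ring, M an R-module and a, b, c, r, α ∈ R such that c·α = a·r, αM = M, (r·b)·m = 0 for all m ∈ M, and every m ∈ M with r·m = 0 lies in aM. Then, as cardinals, |{m ∈ M : b·m = 0}/({m ∈ M : b·m = 0} ∩ cM)| = |{m ∈ M : b·m = 0}/({m ∈ M : b·m = 0} ∩ rM)| · |M/aM|. -/

import Mathlib

/-!
Let `K = ker b`. Multiplication by `r` maps `M` into `K` (as `rb` kills `M`), and `cM = cαM = r(aM)`
lies in `rM`. Hence `m ↦ [r • m]` maps `M` onto `(K ∩ rM)/(K ∩ cM)`, and its kernel is exactly `aM`: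
if `r • m = c • (α • x) = r • (a • x)` then `m - a • x` is `r`-torsion, so it lies in `aM`.
The claim is then the multiplicativity of cardinals in `K ∩ cM ≤ K ∩ rM ≤ K`.
-/

open Cardinal

universe u

namespace Submodule

variable {R : Type*} {M N : Type u} [Ring R] [AddCommGroup M] [Module R M] [AddCommGroup N]
  [Module R N]

theorem mk_eq_mk_quotient_mul_mk (S : Submodule R M) : #M = #(M ⧸ S) * #S := by
  rw [Cardinal.mul_def]
  exact mk_congr AddSubgroup.addGroupEquivQuotientProdAddSubgroup

theorem mk_quotient_eq_mk_quotient_mul_mk_quotient_comap {C : Submodule R N} (f : M →ₗ[R] N)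
    (hC : C ≤ LinearMap.range f) :
    #(N ⧸ C) = #(N ⧸ LinearMap.range f) * #(M ⧸ C.comap f) := by
  have hker : LinearMap.ker (C.mkQ ∘ₗ f) = C.comap f := by
    rw [LinearMap.ker_comp, ker_mkQ]
  have hrange : LinearMap.range (C.mkQ ∘ₗ f) = (LinearMap.range f).map C.mkQ :=
    LinearMap.range_comp f C.mkQ
  rw [mk_eq_mk_quotient_mul_mk ((LinearMap.range f).map C.mkQ),
    mk_congr (quotientQuotientEquivQuotient C _ hC).toEquiv, ← hrange, ← hker,
    mk_congr (C.mkQ ∘ₗ f).quotKerEquivRange.toEquiv]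

end Submodule

section

variable {R M : Type*} [CommRing R] [AddCommGroup M] [Module R M] {a c r α : R}

theorem range_lsmul_le_range_lsmul_of_mul_eq (hca : c * α = a * r)
    (hα : LinearMap.range (LinearMap.lsmul R M α) = ⊤) :
    LinearMap.range (LinearMap.lsmul R M c) ≤ LinearMap.range (LinearMap.lsmul R M r) := by
  rintro _ ⟨m, rfl⟩
  obtain ⟨x, rfl⟩ := LinearMap.range_eq_top.mp hα m
  exact ⟨a • x, by simp only [LinearMap.lsmul_apply, smul_smul, hca, mul_comm r a]⟩

theorem smul_mem_range_lsmul_iff (hca : c * α = a * r)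
    (hα : LinearMap.range (LinearMap.lsmul R M α) = ⊤)
    (hr : ∀ m : M, r • m = 0 → m ∈ LinearMap.range (LinearMap.lsmul R M a)) (m : M) :
    r • m ∈ LinearMap.range (LinearMap.lsmul R M c) ↔
      m ∈ LinearMap.range (LinearMap.lsmul R M a) := by
  have hcα : ∀ x : M, c • α • x = r • a • x := fun x => by
    rw [smul_smul, hca, smul_smul, mul_comm a r]
  constructor
  · rintro ⟨y, hy⟩
    obtain ⟨x, rfl⟩ := LinearMap.range_eq_top.mp hα y
    have htorsion : r • (m - a • x) = 0 := by
      rw [smul_sub, ← hcα]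
      exact sub_eq_zero.mpr hy.symm
    obtain ⟨n, hn⟩ := hr _ htorsion
    refine ⟨n + x, ?_⟩
    simp only [LinearMap.lsmul_apply, smul_add] at hn ⊢
    rw [hn, sub_add_cancel]
  · rintro ⟨n, rfl⟩
    exact ⟨α • n, hcα n⟩

end

/-- If `c·α = a·r`, `αM = M`, `rb` annihilates `M`, and every `r`-torsion
element of `M` lies in `aM`, then
`|ker(b)/(ker(b) ∩ cM)| = |ker(b)/(ker(b) ∩ rM)| · |M/aM|` as cardinals. -/
theorem stmt19 (R : Type*) [CommRing R] (M : Type*) [AddCommGroup M]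
    [Module R M] (a b c r α : R)
    (hca : c * α = a * r)
    (hα : LinearMap.range (LinearMap.lsmul R M α) = ⊤)
    (hrb : ∀ m : M, (r * b) • m = 0)
    (hr : ∀ m : M, r • m = 0 → m ∈ LinearMap.range (LinearMap.lsmul R M a)) :
    Cardinal.mk
        (↥(LinearMap.ker (LinearMap.lsmul R M b)) ⧸
          Submodule.comap (LinearMap.ker (LinearMap.lsmul R M b)).subtype
            (LinearMap.range (LinearMap.lsmul R M c))) =
      Cardinal.mk
          (↥(LinearMap.ker (LinearMap.lsmul R M b)) ⧸
            Submodule.comap (LinearMap.ker (LinearMap.lsmul R M b)).subtype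
              (LinearMap.range (LinearMap.lsmul R M r))) *
        Cardinal.mk (M ⧸ LinearMap.range (LinearMap.lsmul R M a)) := by
  set K := LinearMap.ker (LinearMap.lsmul R M b)
  have hrK : ∀ m : M, LinearMap.lsmul R M r m ∈ K := fun m => by
    simpa only [K, LinearMap.mem_ker, LinearMap.lsmul_apply, smul_smul, mul_comm b r] using hrb m
  let f : M →ₗ[R] K := (LinearMap.lsmul R M r).codRestrict K hrK
  have hrange : LinearMap.range f = (LinearMap.range (LinearMap.lsmul R M r)).comap K.subtype :=
    LinearMap.range_codRestrict K _ hrK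
  have hker : ((LinearMap.range (LinearMap.lsmul R M c)).comap K.subtype).comap f =
      LinearMap.range (LinearMap.lsmul R M a) :=
    Submodule.ext (smul_mem_range_lsmul_iff hca hα hr)
  have hle : (LinearMap.range (LinearMap.lsmul R M c)).comap K.subtype ≤ LinearMap.range f :=
    hrange ▸ Submodule.comap_mono (range_lsmul_le_range_lsmul_of_mul_eq hca hα)
  rw [Submodule.mk_quotient_eq_mk_quotient_mul_mk_quotient_comap f hle, hrange, hker]
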